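/- In the setting of the paper with conditions 1⁰–11⁰, for any subgroup F with H ≤ F ≤ G, the groups G(K(F)) and F contain exactly the same transvections, i.e., for all i ≠ j and x ≤ e_j, H_{ij}(x) ∩ F = H_{ij}(x) ∩ G(K(F)). -/

import Mathlib

open Finset

/-- The group of lattice automorphisms of `L` (order automorphisms), with composition as
multiplication. -/
instance latticeAutGroup {L : Type*} [Lattice L] : Group (L ≃o L) where
  mul f g := g.trans f
  one := OrderIso.refl L
  inv := OrderIso.symm
  mul_assoc f g h := rfl
  one_mul f := rfl
  mul_one f := rfl
  inv_mul_cancel f := by ext x; exact f.symm_apply_apply x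

variable {L : Type*} [CompleteLattice L] {n : ℕ}

/-- `ê i`: the join of all the atoms `e j`, `j ≠ i`. -/
def hatE (e : Fin n → L) (i : Fin n) : L := ((univ : Finset (Fin n)).erase i).sup e

/-- The `i`-th component of the support: `[x]ᵢ = (x ⊔ êᵢ) ⊓ eᵢ`. -/
def sc (e : Fin n → L) (x : L) (i : Fin n) : L := (x ⊔ hatE e i) ⊓ e i

/-- The set `L̄₀` of all elements of the form `x₁ ⊔ ⋯ ⊔ xₙ` with `xᵢ ≤ eᵢ`. -/
def L0bar (e : Fin n → L) : Set L :=
  {x | ∃ y : Fin n → L, (∀ i, y i ≤ e i) ∧ x = (univ : Finset (Fin n)).sup y}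

/-- `H = G(L₀)`: the elements of `G` fixing the sublattice `L₀` generated by the atoms
`e₁, …, eₙ` (together with `⊥`, `⊤`) pointwise; equivalently, fixing every `e i`. -/
def Hset (e : Fin n → L) (G : Subgroup (L ≃o L)) : Set (L ≃o L) :=
  {g | g ∈ G ∧ ∀ i, g (e i) = e i}

/-- `L₀′ = L(H)`: the sublattice of elements fixed by every element of `H`. -/
def L0' (e : Fin n → L) (G : Subgroup (L ≃o L)) : Set L :=
  {x | ∀ h ∈ Hset e G, h x = x}

/-- `Hᵢ`: the automorphisms in `H` which fix every `x ∈ L` with `[x]ᵢ = ⊥`. -/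
def HiSet (e : Fin n → L) (G : Subgroup (L ≃o L)) (i : Fin n) : Set (L ≃o L) :=
  {h | h ∈ Hset e G ∧ ∀ x : L, sc e x i = ⊥ → h x = x}

/-- The set `H_{ij}(x)` of transvections: elements `f ∈ G` such that
(1) `f y = y` for every `s ≠ i` and `y ≤ e s`;
(2) `[f y]ᵢ = y` for every `y ≤ eᵢ`;
(3) `[f eᵢ]ₖ = ⊥` for `k ∉ {i,j}`, `[f eᵢ]ᵢ = eᵢ` and `[f eᵢ]ⱼ = x`. -/
def Hij (e : Fin n → L) (G : Subgroup (L ≃o L)) (i j : Fin n) (x : L) : Set (L ≃o L) :=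
  {f | f ∈ G ∧
       (∀ s, s ≠ i → ∀ y, y ≤ e s → f y = y) ∧
       (∀ y, y ≤ e i → sc e (f y) i = y) ∧
       (∀ k, k ≠ i → k ≠ j → sc e (f (e i)) k = ⊥) ∧
       sc e (f (e i)) i = e i ∧ sc e (f (e i)) j = x}

/-- `G(S)`: the pointwise stabilizer in `G` of a set `S ⊆ L`. -/
def GFix (G : Subgroup (L ≃o L)) (S : Set L) : Set (L ≃o L) :=
  {g | g ∈ G ∧ ∀ x ∈ S, g x = x}

/-- The sublattice of `L` generated by a set `S` (the smallest subset containing `S` closed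
under `⊔` and `⊓`). -/
def latClosure (S : Set L) : Set L :=
  ⋂₀ {T : Set L | S ⊆ T ∧ ∀ a ∈ T, ∀ b ∈ T, a ⊔ b ∈ T ∧ a ⊓ b ∈ T}

/-- The ideal of transvections `σ_{ij}(F)`: for `i ≠ j`, the join of all `x ≤ eⱼ` with
`H_{ij}(x) ∩ F ≠ ∅`; and `σ_{ii} = eᵢ`. -/
def sigmaF (e : Fin n → L) (G : Subgroup (L ≃o L)) (F : Subgroup (L ≃o L))
    (i j : Fin n) : L :=
  if i = j then e i
  else sSup {x | x ≤ e j ∧ (Hij e G i j x ∩ (F : Set (L ≃o L))).Nonempty}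

/-- A net collection in `L₀′`: a family `(τ_{ij})` with `τ_{ij} ≤ eⱼ`, `τ_{ii} = eᵢ`,
`τ_{ij} ∈ L₀′`, and such that for every `g ∈ G`:
`[g eᵢ]ⱼ ≤ τ_{ij}` for all `i, j` iff `[g τ_{ki}]ⱼ ≤ τ_{kj}` for all `i, j, k`. -/
def IsNetCollection (e : Fin n → L) (G : Subgroup (L ≃o L)) (τ : Fin n → Fin n → L) : Prop :=
  (∀ i j, τ i j ≤ e j) ∧
  (∀ i, τ i i = e i) ∧
  (∀ i j, τ i j ∈ L0' e G) ∧
  (∀ g ∈ G, (∀ i j, sc e (g (e i)) j ≤ τ i j) ↔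
      (∀ i j k, sc e (g (τ k i)) j ≤ τ k j))

/-- The sublattice `K_τ` of `L₀′` generated by `⊥` and the elements `⨆ⱼ τ_{ij}`. -/
def Kτ (τ : Fin n → Fin n → L) : Set L :=
  latClosure ({⊥} ∪ Set.range fun i => (univ : Finset (Fin n)).sup (τ i))

/-- **The conditions 1⁰–11⁰ of the paper** for the data: a modular lattice `L` of finite
length, the atoms `e₁, …, eₙ` of a Boolean sublattice `L₀` with the same `⊥` and `⊤` as `L`,
a subgroup `G ≤ Aut L`, and the common value `m` of the dimension on the atoms. -/
structure PaperConditions (e : Fin n → L) (G : Subgroup (L ≃o L)) (m : ℕ) : Prop where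
  /-- `L₀` is a Boolean algebra with atoms `e₁, …, eₙ`: the atoms are nonzero, -/
  atom_ne_bot : ∀ i, e i ≠ ⊥
  /-- independent (`eᵢ ⊓ êᵢ = ⊥`), -/
  indep : ∀ i, e i ⊓ hatE e i = ⊥
  /-- and (condition `1⁰`) `1_{L₀} = 1_L`, i.e. `⨆ᵢ eᵢ = ⊤` (also `0_{L₀} = 0_L = ⊥`). -/
  sup_eq_top : (univ : Finset (Fin n)).sup e = ⊤
  /-- Condition `2⁰`: the dimension function is constant, with value `m`, on the atoms. -/
  height_atom : ∀ i, Order.height (e i) = (m : ℕ∞)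
  /-- Condition `3⁰`. -/
  c3 : ∀ a ∈ G, ∀ i, sc e ((a : L ≃o L) (e i)) i = e i →
      ∃ h ∈ HiSet e G i, ∀ y, y ≤ e i →
        sc e (h ((a : L ≃o L) y)) i = y ∧ sc e ((a : L ≃o L) (h y)) i = y
  /-- Condition `4⁰`. -/
  c4 : ∀ t i : Fin n, ∃ h, h ∈ HiSet e G t ∧ (∀ z ∈ L0bar e, h z = z) ∧
      ∀ a ∈ G, ∀ r, r ≠ i → ∀ y, y ≤ e i →
        sc e ((a : L ≃o L) (h ((a : L ≃o L).symm y))) r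
          = sc e ((a : L ≃o L) (sc e ((a : L ≃o L).symm y) t)) r
  /-- Condition `5⁰`. -/
  c5 : ∀ u ∈ L0bar e, ∀ i, e i ≤ u → ∀ g ∈ G, sc e ((g : L ≃o L) u) i = e i →
      ∃ t ∈ G, sc e ((g : L ≃o L) ((t : L ≃o L) (e i))) i = e i ∧
        (∀ s, s ≠ i → (t : L ≃o L) (e s) = e s) ∧
        ∀ j, sc e ((t : L ≃o L) (e i)) j ≤ sc e u j
  /-- Condition `6⁰`. -/
  c6 : ∀ f ∈ G, ∀ g ∈ G, ∀ i j : Fin n,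
      sc e ((f : L ≃o L) (e i)) j ≤ sc e ((g : L ≃o L) (e i)) j →
      ∀ x ∈ L0' e G, x ≤ e i → sc e ((f : L ≃o L) x) j ≤ sc e ((g : L ≃o L) x) j
  /-- Condition `7⁰`. -/
  c7 : ∀ j : Fin n, ∀ u, u ≤ e j → ∀ i, i ≠ j →
      ∃ (s : ℕ) (y : Fin s → L), (∀ r, y r ≤ e j) ∧
        u = (univ : Finset (Fin s)).sup y ∧ ∀ r, (Hij e G i j (y r)).Nonempty
  /-- Condition `8⁰`. -/
  c8 : ∀ f ∈ G, ∀ i j : Fin n, i ≠ j →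
      ∃ g ∈ Hij e G i j (sc e ((f : L ≃o L) (e i)) j),
        ∀ u, u ≤ e i → sc e (g u) j = sc e ((f : L ≃o L) u) j
  /-- Condition `9⁰`. -/
  c9 : ∀ i j : Fin n, i ≠ j → ∀ x, x ≤ e j → ∀ w : L,
      Order.height w = (m : ℕ∞) →
      sc e w i = e i → sc e w j = x → (∀ k, k ≠ i → k ≠ j → sc e w k = ⊥) →
      (Hij e G i j x).Nonempty → ∃ t ∈ Hij e G i j x, t w = e i
  /-- Condition `10⁰`. -/
  c10 : ∀ i j : Fin n, i ≠ j → ∀ (s : ℕ) (xs : Fin s → L) (a : Fin s → (L ≃o L)),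
      (∀ r, a r ∈ Hij e G i j (xs r)) →
      ∀ y, y ≤ (univ : Finset (Fin s)).sup xs → (Hij e G i j y).Nonempty →
      Hij e G i j y ⊆ ↑(Subgroup.closure (Hset e G ∪ Set.range a))
  /-- Condition `11⁰`. -/
  c11 : ∀ a ∈ G, ∀ t : Fin n, ∀ i j : Fin n, i ≠ j → ∀ h ∈ HiSet e G t,
      (Hij e G i j (sc e ((a : L ≃o L) (h ((a : L ≃o L).symm (e i)))) j) ∩
        ↑(Subgroup.closure (insert (a : L ≃o L) (Hset e G)))).Nonempty

/-! A transvection `f ∈ H_{ij}(x) ∩ F` changes an element `y ≤ eᵢ` only in its `j`-th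
component, and maps `σ_{ki}` into `σ_{ki} ⊔ σ_{kj}` (for `k ∉ {i, j}` through the transvections
in `F` supplied by conditions 4⁰ and 11⁰). Hence it maps each generator `⨆ₜ σ_{kt}` of `K(F)`
below itself, and an automorphism of a lattice with the ascending chain condition that maps an
element below itself fixes it.
Conversely, a transvection `f ∈ H_{ij}(x)` fixing `⨆ₜ σ_{it} ≥ eᵢ` has `x = [f eᵢ]ⱼ ≤ σ_{ij}`,
and `σ_{ij}` is a finite join of parameters of transvections in `F`, so condition 10⁰ puts `f`
in `F`. -/

lemma latticeAut_mul_apply (f g : L ≃o L) (x : L) : (f * g) x = f (g x) := rfl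

lemma latticeAut_inv_apply (f : L ≃o L) (x : L) : f⁻¹ x = f.symm x := rfl

/-- A maximal point moved strictly up would have its image moved strictly up too. -/
lemma OrderIso.eq_of_le_apply {α : Type*} [PartialOrder α] [WellFoundedGT α] (f : α ≃o α)
    {c : α} (hc : c ≤ f c) : f c = c := by
  by_contra hne
  obtain ⟨m, hm, hmax⟩ :=
    wellFounded_gt.has_min {x | x < f x} ⟨c, hc.lt_of_ne (Ne.symm hne)⟩
  exact hmax (f m) (f.strictMono hm) hm

lemma OrderIso.eq_of_apply_le {α : Type*} [PartialOrder α] [WellFoundedGT α] (f : α ≃o α)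
    {c : α} (hc : f c ≤ c) : f c = c := by
  have h := f.symm.eq_of_le_apply (f.le_symm_apply.2 hc)
  rw [← h, f.apply_symm_apply, h]

lemma le_finset_sup_inf_sup_erase {α ι : Type*} [Lattice α] [OrderBot α] [IsModularLattice α]
    [DecidableEq ι] (e : ι → α) (s : Finset ι) {u : α} (hu : u ≤ s.sup e) :
    u ≤ s.sup fun t => (u ⊔ (s.erase t).sup e) ⊓ e t := by
  induction s using Finset.induction_on generalizing u with
  | empty => simpa using hu
  | @insert i s hi ih =>
    rw [Finset.sup_insert] at hu
    have hsplit : u ≤ (u ⊔ s.sup e) ⊓ e i ⊔ (u ⊔ e i) ⊓ s.sup e := by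
      rw [inf_comm (u ⊔ e i), ← sup_inf_assoc_of_le _ (inf_le_right.trans le_sup_right),
        sup_comm _ (s.sup e), inf_comm _ (e i), ← sup_inf_assoc_of_le _ le_sup_right]
      exact le_inf (le_inf (hu.trans_eq (sup_comm _ _)) le_sup_left) le_sup_left
    refine hsplit.trans (sup_le ?_ ?_)
    · refine le_trans ?_ (Finset.le_sup (mem_insert_self i s))
      rw [Finset.erase_insert hi]
    · refine (ih inf_le_right).trans (Finset.sup_le fun t ht => ?_)
      have hit : i ≠ t := fun h => hi (h ▸ ht)
      have hei : e i ≤ ((insert i s).erase t).sup e :=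
        Finset.le_sup (mem_erase.2 ⟨hit, mem_insert_self i s⟩)
      have hsub : (s.erase t).sup e ≤ ((insert i s).erase t).sup e :=
        Finset.sup_mono (Finset.erase_subset_erase t (Finset.subset_insert i s))
      refine le_trans ?_ (Finset.le_sup (mem_insert_of_mem ht))
      exact inf_le_inf_right _ (sup_le
        (inf_le_left.trans (sup_le le_sup_left (hei.trans le_sup_right)))
        (hsub.trans le_sup_right))

lemma subset_latClosure (S : Set L) : S ⊆ latClosure S :=
  fun _ hx => Set.mem_sInter.2 fun _ hT => hT.1 hx

lemma latClosure_subset {S T : Set L} (hST : S ⊆ T)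
    (hT : ∀ a ∈ T, ∀ b ∈ T, a ⊔ b ∈ T ∧ a ⊓ b ∈ T) : latClosure S ⊆ T :=
  Set.sInter_subset_of_mem ⟨hST, hT⟩

lemma OrderIso.latClosure_subset_fixedPoints (f : L ≃o L) {S : Set L}
    (hS : ∀ x ∈ S, f x = x) : latClosure S ⊆ {x | f x = x} :=
  latClosure_subset hS fun a ha b hb => ⟨by rw [Set.mem_ofPred_eq, map_sup, ha, hb],
    by rw [Set.mem_ofPred_eq, map_inf, ha, hb]⟩

section Support

variable {e : Fin n → L}

lemma le_hatE {t s : Fin n} (h : t ≠ s) : e t ≤ hatE e s :=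
  Finset.le_sup (mem_erase.2 ⟨h, mem_univ t⟩)

lemma sc_le (u : L) (t : Fin n) : sc e u t ≤ e t := inf_le_right

lemma sc_mono {u v : L} (h : u ≤ v) (t : Fin n) : sc e u t ≤ sc e v t :=
  inf_le_inf_right _ (sup_le_sup_right h _)

lemma le_sup_sc [IsModularLattice L] (htop : univ.sup e = ⊤) (u : L) :
    u ≤ univ.sup (sc e u) :=
  le_finset_sup_inf_sup_erase e univ (htop ▸ le_top)

lemma sc_le_of_le_sup_hatE [IsModularLattice L] (hind : ∀ i, e i ⊓ hatE e i = ⊥)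
    {u v : L} {j : Fin n} (hv : v ≤ e j) (hu : u ≤ v ⊔ hatE e j) : sc e u j ≤ v := by
  refine (sc_mono hu j).trans_eq ?_
  rw [sc, sup_assoc, sup_idem, sup_inf_assoc_of_le _ hv, inf_comm, hind j, sup_bot_eq]

lemma finset_sup_le_sup_hatE {τ : Fin n → L} (hτ : ∀ t, τ t ≤ e t) (j : Fin n) :
    univ.sup τ ≤ τ j ⊔ hatE e j := by
  refine Finset.sup_le fun t _ => ?_
  rcases eq_or_ne t j with rfl | htj
  · exact le_sup_left
  · exact ((hτ t).trans (le_hatE htj)).trans le_sup_right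

end Support

section Transvections

variable {e : Fin n → L} {G : Subgroup (L ≃o L)} {i j : Fin n} {x : L} {f : L ≃o L}

lemma apply_eq_self_of_mem_Hij (hf : f ∈ Hij e G i j x) {s : Fin n} (hs : s ≠ i) {y : L}
    (hy : y ≤ e s) : f y = y :=
  hf.2.1 s hs y hy

lemma sc_apply_of_mem_Hij (hf : f ∈ Hij e G i j x) : sc e (f (e i)) j = x :=
  hf.2.2.2.2.2

lemma le_of_mem_Hij (hf : f ∈ Hij e G i j x) : x ≤ e j :=
  sc_apply_of_mem_Hij hf ▸ sc_le _ j

lemma apply_le_sup_of_mem_Hij [IsModularLattice L] (htop : univ.sup e = ⊤)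
    (hf : f ∈ Hij e G i j x) {y b : L} (hy : y ≤ e i) (hb : sc e (f y) j ≤ b) :
    f y ≤ y ⊔ b := by
  obtain ⟨-, -, hsc, hother, -, -⟩ := hf
  refine (le_sup_sc htop (f y)).trans (Finset.sup_le fun r _ => ?_)
  rcases eq_or_ne r i with rfl | hri
  · exact (hsc y hy).le.trans le_sup_left
  rcases eq_or_ne r j with rfl | hrj
  · exact hb.trans le_sup_right
  · exact ((sc_mono (f.monotone hy) r).trans_eq (hother r hri hrj)).trans bot_le

end Transvections

section Sigma

variable {e : Fin n → L} {G F : Subgroup (L ≃o L)}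

lemma sigmaF_self (i : Fin n) : sigmaF e G F i i = e i := if_pos rfl

lemma sigmaF_of_ne {i j : Fin n} (hij : i ≠ j) :
    sigmaF e G F i j = sSup {x | x ≤ e j ∧ (Hij e G i j x ∩ (F : Set (L ≃o L))).Nonempty} :=
  if_neg hij

lemma sigmaF_le (i j : Fin n) : sigmaF e G F i j ≤ e j := by
  rcases eq_or_ne i j with rfl | hij
  · exact (sigmaF_self i).le
  · exact (sigmaF_of_ne hij).trans_le (sSup_le fun _ hx => hx.1)

lemma le_sigmaF {i j : Fin n} (hij : i ≠ j) {x : L} {f : L ≃o L} (hf : f ∈ Hij e G i j x)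
    (hfF : f ∈ F) : x ≤ sigmaF e G F i j := by
  rw [sigmaF_of_ne hij]
  exact le_sSup ⟨le_of_mem_Hij hf, f, hf, hfF⟩

lemma exists_finset_sigmaF_eq_sup [WellFoundedGT L] {i j : Fin n} (hij : i ≠ j) :
    ∃ s : Finset L, (∀ z ∈ s, z ≤ e j ∧ (Hij e G i j z ∩ (F : Set (L ≃o L))).Nonempty) ∧
      sigmaF e G F i j = s.sup id := by
  obtain ⟨s, hsub, hs⟩ := (CompleteLattice.wellFoundedGT_iff_isSupFiniteCompact L).1
    ‹_› {z | z ≤ e j ∧ (Hij e G i j z ∩ (F : Set (L ≃o L))).Nonempty}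
  exact ⟨s, fun z hz => hsub hz, (sigmaF_of_ne hij).trans hs⟩

end Sigma

section PaperConditions

variable {e : Fin n → L} {G F : Subgroup (L ≃o L)} {m : ℕ}

/-- Condition 11⁰ for `a = f a'⁻¹ ∈ F` gives a transvection in `H_{kj}([f y]ⱼ) ∩ F`;
condition 4⁰ identifies its parameter. -/
lemma sc_apply_le_sigmaF [IsModularLattice L] (hc : PaperConditions e G m)
    (hHF : Hset e G ⊆ (F : Set (L ≃o L))) (hFG : F ≤ G) {i j k : Fin n} (hki : k ≠ i)
    (hkj : k ≠ j) {x y : L} {f a' : L ≃o L} (hf : f ∈ Hij e G i j x) (hfF : f ∈ F)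
    (ha' : a' ∈ Hij e G k i y) (ha'F : a' ∈ F) :
    sc e (f y) j ≤ sigmaF e G F k j := by
  set a := f * a'⁻¹
  have haF : a ∈ F := mul_mem hfF (inv_mem ha'F)
  have ha_symm : a.symm (e k) = a' (e k) := by
    change (a' * f⁻¹) (e k) = _
    rw [latticeAut_mul_apply, latticeAut_inv_apply,
      f.symm_apply_eq.2 (apply_eq_self_of_mem_Hij hf hki le_rfl).symm]
  have ha_y : a y = f y := by
    change f (a'.symm y) = f y
    rw [a'.symm_apply_eq.2 (apply_eq_self_of_mem_Hij ha' (Ne.symm hki) (le_of_mem_Hij ha')).symm]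
  obtain ⟨h, hh, -, hconj⟩ := hc.c4 i k
  have hparam : sc e (a (h (a.symm (e k)))) j = sc e (f y) j := by
    rw [hconj a (hFG haF) j (Ne.symm hkj) (e k) le_rfl, ha_symm, sc_apply_of_mem_Hij ha', ha_y]
  obtain ⟨w, hw, hw_cl⟩ := hc.c11 a (hFG haF) i k j hkj h hh
  rw [hparam] at hw
  exact le_sigmaF hkj hw ((Subgroup.closure_le F).2 (Set.insert_subset haF hHF) hw_cl)

lemma apply_sigmaF_le_sup [IsModularLattice L] [WellFoundedGT L] (hc : PaperConditions e G m)
    (hHF : Hset e G ⊆ (F : Set (L ≃o L))) (hFG : F ≤ G) {i j : Fin n} (hij : i ≠ j) {x : L}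
    {f : L ≃o L} (hf : f ∈ Hij e G i j x) (hfF : f ∈ F) (k : Fin n) :
    f (sigmaF e G F k i) ≤ sigmaF e G F k i ⊔ sigmaF e G F k j := by
  have htop := hc.sup_eq_top
  rcases eq_or_ne k i with rfl | hki
  · refine apply_le_sup_of_mem_Hij htop hf (sigmaF_le k k) ?_
    rw [sigmaF_self, sc_apply_of_mem_Hij hf]
    exact le_sigmaF hij hf hfF
  rcases eq_or_ne k j with rfl | hkj
  · exact apply_le_sup_of_mem_Hij htop hf (sigmaF_le k i) ((sc_le _ k).trans (sigmaF_self k).ge)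
  obtain ⟨s, hs, hσ⟩ := exists_finset_sigmaF_eq_sup (G := G) (F := F) hki
  rw [hσ, map_finset_sup f]
  refine Finset.sup_le fun z hz => ?_
  obtain ⟨hzi, a', ha', ha'F⟩ := hs z hz
  exact (apply_le_sup_of_mem_Hij htop hf hzi
    (sc_apply_le_sigmaF hc hHF hFG hki hkj hf hfF ha' ha'F)).trans
    (sup_le_sup_right (Finset.le_sup (f := id) hz) _)

lemma apply_sup_sigmaF_eq [IsModularLattice L] [WellFoundedGT L] (hc : PaperConditions e G m)
    (hHF : Hset e G ⊆ (F : Set (L ≃o L))) (hFG : F ≤ G) {i j : Fin n} (hij : i ≠ j) {x : L}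
    {f : L ≃o L} (hf : f ∈ Hij e G i j x) (hfF : f ∈ F) (k : Fin n) :
    f (univ.sup (sigmaF e G F k)) = univ.sup (sigmaF e G F k) := by
  refine f.eq_of_apply_le ?_
  rw [map_finset_sup f]
  refine Finset.sup_le fun t _ => ?_
  rcases eq_or_ne t i with rfl | hti
  · exact (apply_sigmaF_le_sup hc hHF hFG hij hf hfF k).trans
      (sup_le (Finset.le_sup (mem_univ t)) (Finset.le_sup (mem_univ j)))
  · exact (apply_eq_self_of_mem_Hij hf hti (sigmaF_le k t)).trans_le (Finset.le_sup (mem_univ t))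

lemma mem_GFix_Kτ_of_mem_Hij [IsModularLattice L] [WellFoundedGT L]
    (hc : PaperConditions e G m) (hHF : Hset e G ⊆ (F : Set (L ≃o L))) (hFG : F ≤ G)
    {i j : Fin n} (hij : i ≠ j) {x : L} {f : L ≃o L} (hf : f ∈ Hij e G i j x) (hfF : f ∈ F) :
    f ∈ GFix G (Kτ (sigmaF e G F)) := by
  refine ⟨hFG hfF, fun z hz => f.latClosure_subset_fixedPoints ?_ hz⟩
  rintro w (rfl | ⟨k, rfl⟩)
  · exact map_bot f
  · exact apply_sup_sigmaF_eq hc hHF hFG hij hf hfF k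

lemma mem_of_mem_Hij_of_le_finset_sup (hc : PaperConditions e G m)
    (hHF : Hset e G ⊆ (F : Set (L ≃o L))) {i j : Fin n} (hij : i ≠ j) {s : Finset L}
    (hs : ∀ z ∈ s, (Hij e G i j z ∩ (F : Set (L ≃o L))).Nonempty) {x : L} (hx : x ≤ s.sup id)
    {f : L ≃o L} (hf : f ∈ Hij e G i j x) : f ∈ F := by
  let xs : Fin s.card → L := fun r => s.equivFin.symm r
  choose a ha haF using fun r => hs _ (s.equivFin.symm r).2
  have hx' : x ≤ univ.sup xs := hx.trans <| Finset.sup_le fun z hz =>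
    (congrArg Subtype.val (s.equivFin.symm_apply_apply ⟨z, hz⟩)).ge.trans
      (Finset.le_sup (f := xs) (mem_univ _))
  have hcl : Subgroup.closure (Hset e G ∪ Set.range a) ≤ F :=
    (Subgroup.closure_le F).2 (Set.union_subset hHF (Set.range_subset_iff.2 haF))
  exact hcl (hc.c10 i j hij s.card xs a ha x hx' ⟨f, hf⟩ hf)

lemma mem_of_mem_Hij_of_mem_GFix_Kτ [IsModularLattice L] [WellFoundedGT L]
    (hc : PaperConditions e G m) (hHF : Hset e G ⊆ (F : Set (L ≃o L))) {i j : Fin n}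
    (hij : i ≠ j) {x : L} {f : L ≃o L} (hf : f ∈ Hij e G i j x)
    (hfK : f ∈ GFix G (Kτ (sigmaF e G F))) : f ∈ F := by
  have hfix : f (univ.sup (sigmaF e G F i)) = univ.sup (sigmaF e G F i) :=
    hfK.2 _ (subset_latClosure _ (Or.inr ⟨i, rfl⟩))
  have hei : e i ≤ univ.sup (sigmaF e G F i) :=
    (sigmaF_self i).ge.trans (le_sup (mem_univ i))
  have hxσ : x ≤ sigmaF e G F i j := by
    rw [← sc_apply_of_mem_Hij hf]
    refine sc_le_of_le_sup_hatE hc.indep (sigmaF_le i j) ?_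
    exact (f.monotone hei).trans (hfix.trans_le (finset_sup_le_sup_hatE (sigmaF_le i) j))
  obtain ⟨s, hs, hσ⟩ := exists_finset_sigmaF_eq_sup (G := G) (F := F) hij
  exact mem_of_mem_Hij_of_le_finset_sup hc hHF hij (fun z hz => (hs z hz).2) (hσ ▸ hxσ) hf

end PaperConditions

theorem transvections_eq_of_KF_general {L : Type*} [CompleteLattice L] [IsModularLattice L]
    [WellFoundedGT L] {n : ℕ} (e : Fin n → L)
    (G F : Subgroup (L ≃o L)) (m : ℕ)
    (hc : PaperConditions e G m)
    (hHF : Hset e G ⊆ (F : Set (L ≃o L))) (hFG : F ≤ G) :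
    ∀ i j : Fin n, i ≠ j → ∀ x, x ≤ e j →
      Hij e G i j x ∩ (F : Set (L ≃o L)) =
        Hij e G i j x ∩ GFix G (Kτ (sigmaF e G F)) := by
  intro i j hij x _
  ext f
  exact and_congr_right fun hf =>
    ⟨mem_GFix_Kτ_of_mem_Hij hc hHF hFG hij hf, mem_of_mem_Hij_of_mem_GFix_Kτ hc hHF hij hf⟩

/-- **Lemma 7.5 / Corollary 4 to Theorem 7.4.** In the setting of the paper with conditions
`1⁰`–`11⁰`, for any subgroup `F` with `H ≤ F ≤ G`, the groups `G(K(F))` and `F` contain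
exactly the same transvections: for all `i ≠ j` and `x ≤ eⱼ`,
`H_{ij}(x) ∩ F = H_{ij}(x) ∩ G(K(F))`, where `K(F)` is the sublattice generated by `⊥` and
the elements `⨆ⱼ σ_{ij}(F)`. -/
theorem transvections_eq_of_KF {L : Type*} [CompleteLattice L] [IsModularLattice L]
    [WellFoundedLT L] [WellFoundedGT L] {n : ℕ} (e : Fin n → L)
    (G F : Subgroup (L ≃o L)) (m : ℕ)
    (hc : PaperConditions e G m)
    (hHF : Hset e G ⊆ (F : Set (L ≃o L))) (hFG : F ≤ G) :
    ∀ i j : Fin n, i ≠ j → ∀ x, x ≤ e j →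
      Hij e G i j x ∩ (F : Set (L ≃o L)) =
        Hij e G i j x ∩ GFix G (Kτ (sigmaF e G F)) :=
  transvections_eq_of_KF_general e G F m hc hHF hFG
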